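/- Let n ≥ 1 and K ≥ 0 be integers, let S ∈ ℂ^{n×n}, let ε ≥ 0, let E ∈ ℂ^{n×n} with ‖E‖₂ ≤ ε, and let δ_0,…,δ_K ∈ ℂ. Then the spectral radius of Σ_{k=0}^K δ_k (S+E)^k satisfies ρ( Σ_{k=0}^K δ_k (S+E)^k ) ≤ sup_{0 ≤ x ≤ ρ_ε(S)} Σ_{k=0}^K |δ_k| x^k. -/

import Mathlib

open scoped BigOperators
open Matrix

/-- Operator 2-norm (largest singular value) of a complex matrix. -/
noncomputable def opNorm {m n : ℕ} (A : Matrix (Fin m) (Fin n) ℂ) : ℝ :=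
  ‖LinearMap.toContinuousLinearMap (Matrix.toEuclideanLin A)‖

/-- Euclidean norm of a complex vector. -/
noncomputable def vnorm {n : ℕ} (x : Fin n → ℂ) : ℝ :=
  ‖(WithLp.equiv 2 (Fin n → ℂ)).symm x‖

/-- Spectral radius: maximum modulus of the eigenvalues. -/
noncomputable def specRad {n : ℕ} (A : Matrix (Fin n) (Fin n) ℂ) : ℝ :=
  sSup ((fun z : ℂ => ‖z‖) '' spectrum ℂ A)

/-- ε-pseudospectrum. -/
def pseudoSpec {n : ℕ} (ε : ℝ) (A : Matrix (Fin n) (Fin n) ℂ) : Set ℂ :=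
  {z | ∃ E : Matrix (Fin n) (Fin n) ℂ, opNorm E ≤ ε ∧ z ∈ spectrum ℂ (A + E)}

/-- ε-pseudospectral radius. -/
noncomputable def pseudoSpecRad {n : ℕ} (ε : ℝ) (A : Matrix (Fin n) (Fin n) ℂ) : ℝ :=
  sSup ((fun z : ℂ => ‖z‖) '' pseudoSpec ε A)

/-- The Bernstein change-of-basis matrix M(K,R):
`M_{i,j} = (−1)^{i−j} C(K,j) C(K−j, i−j) / R^i` for `j ≤ i`, and `0` otherwise. -/
noncomputable def Mmat (K : ℕ) (R : ℝ) : Matrix (Fin (K+1)) (Fin (K+1)) ℝ :=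
  fun i j =>
    if (j : ℕ) ≤ (i : ℕ) then
      ((-1 : ℝ) ^ ((i : ℕ) - (j : ℕ)) * (K.choose j) *
        ((K - (j : ℕ)).choose ((i : ℕ) - (j : ℕ)))) / R ^ (i : ℕ)
    else 0

/-- Graph filter `H_h(S) = Σ_{k=0}^K h_k S^k`. -/
noncomputable def filt {n : ℕ} (K : ℕ) (h : ℕ → ℂ) (S : Matrix (Fin n) (Fin n) ℂ) :
    Matrix (Fin n) (Fin n) ℂ :=
  ∑ k ∈ Finset.range (K+1), h k • S ^ k

/-- Vector of absolute values of the first K+1 coefficients. -/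
noncomputable def absVec (K : ℕ) (h : ℕ → ℂ) : Fin (K+1) → ℝ := fun i => ‖h i‖

/-- The constant `M̄ = max_{0≤ℓ≤K} Σ_{k=ℓ}^K |h_k| C(k,ℓ) ‖S‖₂^{k−ℓ}`. -/
noncomputable def Mbar {n : ℕ} (K : ℕ) (h : ℕ → ℂ) (S : Matrix (Fin n) (Fin n) ℂ) : ℝ :=
  ⨆ ℓ : Fin (K+1), ∑ k ∈ Finset.Icc (ℓ : ℕ) K,
    ‖h k‖ * (k.choose ℓ) * opNorm S ^ (k - (ℓ : ℕ))

/-- Complex ReLU: `CReLU(x + iy) = max(x,0) + i max(y,0)`. -/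
noncomputable def CReLU (z : ℂ) : ℂ := ⟨max z.re 0, max z.im 0⟩

/-- Entrywise complex ReLU on vectors. -/
noncomputable def CReLUv {n : ℕ} (x : Fin n → ℂ) : Fin n → ℂ := fun i => CReLU (x i)

/-! Every eigenvalue of `p(S + E)`, with `p = Σ δ_k X^k`, is `p(λ)` for an eigenvalue `λ` of
`S + E` (spectral mapping), and `|λ| ≤ ρ_ε(S)` because `λ` lies in the ε-pseudospectrum of `S`.
The triangle inequality then bounds `|p(λ)|` by `Σ |δ_k| |λ|^k`. -/

open Polynomial

theorem spectrum.map_polynomial_aeval_of_finiteDimensional {𝕜 A : Type*} [Field 𝕜]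
    [IsAlgClosed 𝕜] [Ring A] [Algebra 𝕜 A] [FiniteDimensional 𝕜 A] (a : A) (p : 𝕜[X]) :
    spectrum 𝕜 (aeval a p) = (eval · p) '' spectrum 𝕜 a := by
  rcases subsingleton_or_nontrivial A with hA | hA
  · simp [spectrum.of_subsingleton]
  · exact spectrum.map_polynomial_aeval_of_nonempty a p
      (spectrum.nonempty_of_isAlgClosed_of_finiteDimensional 𝕜 a)

theorem opNorm_eq_norm_toEuclideanCLM {n : ℕ} (A : Matrix (Fin n) (Fin n) ℂ) :
    opNorm A = ‖Matrix.toEuclideanCLM (𝕜 := ℂ) A‖ :=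
  rfl

theorem opNorm_add_le {n : ℕ} (A B : Matrix (Fin n) (Fin n) ℂ) :
    opNorm (A + B) ≤ opNorm A + opNorm B := by
  simpa only [opNorm_eq_norm_toEuclideanCLM, map_add] using norm_add_le _ _

theorem norm_le_opNorm_of_mem_spectrum {n : ℕ} {A : Matrix (Fin n) (Fin n) ℂ} {z : ℂ}
    (hz : z ∈ spectrum ℂ A) : ‖z‖ ≤ opNorm A := by
  rw [← AlgEquiv.spectrum_eq (Matrix.toEuclideanCLM (n := Fin n) (𝕜 := ℂ))] at hz
  calc ‖z‖ ≤ opNorm A * ‖(1 : EuclideanSpace ℂ (Fin n) →L[ℂ] EuclideanSpace ℂ (Fin n))‖ :=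
        mem_closedBall_zero_iff.mp (spectrum.subset_closedBall_norm_mul _ hz)
    _ ≤ opNorm A := mul_le_of_le_one_right (norm_nonneg _) ContinuousLinearMap.norm_id_le

theorem bddAbove_norm_pseudoSpec {n : ℕ} (ε : ℝ) (S : Matrix (Fin n) (Fin n) ℂ) :
    BddAbove ((fun z : ℂ => ‖z‖) '' pseudoSpec ε S) := by
  refine ⟨opNorm S + ε, ?_⟩
  rintro _ ⟨z, ⟨E, hE, hz⟩, rfl⟩
  linarith [norm_le_opNorm_of_mem_spectrum hz, opNorm_add_le S E]

theorem norm_le_pseudoSpecRad {n : ℕ} {ε : ℝ} {S E : Matrix (Fin n) (Fin n) ℂ}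
    (hE : opNorm E ≤ ε) {z : ℂ} (hz : z ∈ spectrum ℂ (S + E)) :
    ‖z‖ ≤ pseudoSpecRad ε S :=
  le_csSup (bddAbove_norm_pseudoSpec ε S) ⟨z, ⟨E, hE, hz⟩, rfl⟩

theorem stmt_11_general {n : ℕ} (K : ℕ)
    (S : Matrix (Fin n) (Fin n) ℂ) (ε : ℝ)
    (E : Matrix (Fin n) (Fin n) ℂ) (hE : opNorm E ≤ ε)
    (δ : ℕ → ℂ) :
    specRad (∑ k ∈ Finset.range (K+1), δ k • (S + E) ^ k) ≤
      sSup ((fun x : ℝ => ∑ k ∈ Finset.range (K+1), ‖δ k‖ * x ^ k) ''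
        Set.Icc 0 (pseudoSpecRad ε S)) := by
  set P : ℂ[X] := ∑ k ∈ Finset.range (K+1), C (δ k) * X ^ k
  have hP : aeval (S + E) P = ∑ k ∈ Finset.range (K+1), δ k • (S + E) ^ k := by
    simp [P, Algebra.smul_def]
  have hbdd : BddAbove ((fun x : ℝ => ∑ k ∈ Finset.range (K+1), ‖δ k‖ * x ^ k) ''
      Set.Icc 0 (pseudoSpecRad ε S)) :=
    (isCompact_Icc.image (by fun_prop)).bddAbove
  refine Real.sSup_le ?_ (Real.sSup_nonneg ?_)
  · rintro _ ⟨μ, hμ, rfl⟩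
    rw [← hP, spectrum.map_polynomial_aeval_of_finiteDimensional] at hμ
    obtain ⟨z, hz, rfl⟩ := hμ
    calc ‖P.eval z‖ ≤ ∑ k ∈ Finset.range (K+1), ‖δ k‖ * ‖z‖ ^ k := by
          simpa [P, eval_finsetSum] using
            norm_sum_le (Finset.range (K+1)) fun k => δ k * z ^ k
      _ ≤ _ := le_csSup hbdd ⟨‖z‖, ⟨norm_nonneg z, norm_le_pseudoSpecRad hE hz⟩, rfl⟩
  · rintro _ ⟨x, ⟨hx, -⟩, rfl⟩
    positivity

/-- **Statement 11: pseudospectral bound on the spectral radius of a perturbed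
matrix polynomial.** -/
theorem stmt_11 {n : ℕ} (hn : 1 ≤ n) (K : ℕ)
    (S : Matrix (Fin n) (Fin n) ℂ) (ε : ℝ) (hε : 0 ≤ ε)
    (E : Matrix (Fin n) (Fin n) ℂ) (hE : opNorm E ≤ ε)
    (δ : ℕ → ℂ) :
    specRad (∑ k ∈ Finset.range (K+1), δ k • (S + E) ^ k) ≤
      sSup ((fun x : ℝ => ∑ k ∈ Finset.range (K+1), ‖δ k‖ * x ^ k) ''
        Set.Icc 0 (pseudoSpecRad ε S)) :=
  stmt_11_general K S ε E hE δ
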